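/- There exists an absolute constant C > 0 with the following property. For every integer d ≥ 1, every integer N ≥ 1, and every subset A ⊆ {1,2,…,N}, there exist an integer m with 1 ≤ m ≤ 2^(d(d+1)), nonnegative reals λ_1,…,λ_m with λ_1 + ⋯ + λ_m = 1, integers M_1,…,M_m with 1 ≤ M_i ≤ 2^d, and subsets B_i ⊆ ℤ_{M_i}, such that for every j ∈ {1,…,d}: | (1/N)·r_A(j) − ∑_{i=1}^{m} λ_i · r_{B_i}(j)/M_i | ≤ C·2^d·2^(d(d+1))/N. -/

import Mathlib

/-- `r_A(x)`: number of ordered pairs `(a,b) ∈ A × A` with `a - b = x`. -/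
def rZ (A : Finset ℤ) (x : ℤ) : ℕ :=
  ((A ×ˢ A).filter (fun p => p.1 - p.2 = x)).card

/-- `r_B(x)` for `B ⊆ ℤ_M`: pairs `(u,v) ∈ B × B` with `u - v = x mod M`. -/
def rMod (M : ℕ) (B : Finset (ZMod M)) (x : ℤ) : ℕ :=
  ((B ×ˢ B).filter (fun p => p.1 - p.2 = (x : ZMod M))).card

open Finset Function

/-!
Encode `A` as the `(N + d)`-periodic `0/1` sequence `t ↦ [t % (N + d) ∈ A]`: thanks to the padding
of length `d`, its cyclic correlations at distances `1, …, d` are exactly the `r_A(j)`, and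
normalising by `N + d` instead of `N` costs at most `d / N`.

The normalised correlation vector of a periodic `0/1` sequence of period `L` lies in the convex
hull of those of sequences of period at most `2 ^ d`. Indeed, if `L > 2 ^ d` then by pigeonhole two
windows of length `d` at positions `p` and `p + c` coincide, and cutting the cycle at `p` and
`p + c` and closing up both arcs gives cycles of lengths `c` and `L - c` whose correlations at
distances `≤ d` add up to those of the original one. Carathéodory's theorem then bounds the number
of points needed by `d + 1`.
-/

theorem card_filter_sub_eq_card_filter_add_mem {G : Type*} [AddCommGroup G] [DecidableEq G]
    (A : Finset G) (x : G) :
    #{p ∈ A ×ˢ A | p.1 - p.2 = x} = #{b ∈ A | b + x ∈ A} := by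
  symm
  apply card_nbij' (fun b => (b + x, b)) Prod.snd
  · intro b hb
    simp only [coe_filter, Set.mem_ofPred_eq, mem_product] at hb ⊢
    exact ⟨⟨hb.2, hb.1⟩, by simp⟩
  · intro p hp
    simp only [coe_filter, Set.mem_ofPred_eq, mem_product] at hp ⊢
    obtain ⟨⟨h1, h2⟩, rfl⟩ := hp
    simpa [h2] using h1
  · intro b _; rfl
  · intro p hp
    simp only [coe_filter, Set.mem_ofPred_eq] at hp
    ext <;> simp [← hp.2]

theorem Function.Periodic.apply_emod {α : Type*} {y : ℤ → α} {L : ℤ} (hy : Periodic y L)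
    (t : ℤ) : y (t % L) = y t := by
  rw [Int.emod_def, mul_comm]
  exact hy.sub_int_mul_eq _

noncomputable def windowCorr (y : ℤ → Bool) (a : ℤ) (L : ℕ) (j : ℤ) : ℕ :=
  #{i ∈ Ico a (a + L) | y i ∧ y (i + j)}

theorem windowCorr_eq_rMod {L : ℕ} [NeZero L] {y : ℤ → Bool} (hy : Periodic y L) (a j : ℤ) :
    windowCorr y a L j = rMod L {u | y u.val} j := by
  rw [rMod, card_filter_sub_eq_card_filter_add_mem]
  have hL : (0 : ℤ) < L := by exact_mod_cast Nat.pos_of_neZero L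
  have hval : ∀ t : ℤ, y ((t : ZMod L).val : ℤ) = y t := fun t => by
    rw [ZMod.val_intCast, hy.apply_emod]
  apply card_nbij' (fun i : ℤ => (i : ZMod L)) (fun u => a + ((u.val : ℤ) - a) % (L : ℤ))
  · intro i hi
    simp only [coe_filter, Set.mem_ofPred_eq, mem_filter, mem_univ, true_and] at hi ⊢
    rw [← Int.cast_add, hval, hval]
    exact hi.2
  · intro u hu
    simp only [coe_filter, Set.mem_ofPred_eq, mem_filter, mem_univ, true_and, mem_Ico] at hu ⊢
    have h₀ := Int.emod_nonneg ((u.val : ℤ) - a) hL.ne'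
    have h₁ := Int.emod_lt_of_pos ((u.val : ℤ) - a) hL
    have hcast : ((a + ((u.val : ℤ) - a) % (L : ℤ) : ℤ) : ZMod L) = u := by
      push_cast [ZMod.intCast_mod]
      simp
    refine ⟨⟨by omega, by omega⟩, ?_, ?_⟩
    · rw [← hval, hcast]; exact hu.1
    · rw [← hval, Int.cast_add, hcast]; exact hu.2
  · intro i hi
    simp only [coe_filter, Set.mem_ofPred_eq, mem_Ico] at hi
    dsimp only
    rw [ZMod.val_intCast, Int.sub_emod, Int.emod_emod, ← Int.sub_emod,
      Int.emod_eq_of_lt (by omega) (by omega)]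
    ring
  · intro u _
    simp [ZMod.intCast_mod]

theorem windowCorr_start_eq {L : ℕ} [NeZero L] {y : ℤ → Bool} (hy : Periodic y L) (a b j : ℤ) :
    windowCorr y a L j = windowCorr y b L j := by
  rw [windowCorr_eq_rMod hy, windowCorr_eq_rMod hy]

theorem windowCorr_add (y : ℤ → Bool) (a : ℤ) (L₁ L₂ : ℕ) (j : ℤ) :
    windowCorr y a (L₁ + L₂) j = windowCorr y a L₁ j + windowCorr y (a + L₁) L₂ j := by
  unfold windowCorr
  rw [Nat.cast_add, ← add_assoc, ← Ico_union_Ico_eq_Ico (b := a + L₁) (by omega) (by omega),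
    filter_union, card_union_of_disjoint
      (disjoint_filter_filter (Ico_disjoint_Ico_consecutive _ _ _))]

theorem windowCorr_congr {y z : ℤ → Bool} {a j : ℤ} {L : ℕ} (hj : 0 ≤ j)
    (h : Set.EqOn y z (Set.Ico a (a + L + j))) : windowCorr y a L j = windowCorr z a L j := by
  unfold windowCorr
  congr 1
  refine filter_congr fun i hi => ?_
  rw [mem_Ico] at hi
  rw [h ⟨hi.1, by omega⟩, h ⟨by omega, by omega⟩]

def periodize {α : Type*} (y : ℤ → α) (a c : ℤ) (t : ℤ) : α :=
  y (a + (t - a) % c)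

theorem periodic_periodize {α : Type*} (y : ℤ → α) (a c : ℤ) : Periodic (periodize y a c) c := by
  intro t
  simp only [periodize, add_sub_right_comm, Int.add_emod_right]

theorem periodize_eqOn {α : Type*} {y : ℤ → α} {a c d : ℤ} (hc : 0 < c)
    (hy : ∀ s ∈ Set.Ico a (a + d), y (s + c) = y s) :
    Set.EqOn (periodize y a c) y (Set.Ico a (a + c + d)) := by
  suffices ∀ n : ℕ, ∀ t, a ≤ t → t < a + n → t < a + c + d → periodize y a c t = y t from
    fun t ht => this ((t - a).toNat + 1) t ht.1 (by omega) ht.2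
  intro n
  induction n with
  | zero => intro t h₁ h₂; omega
  | succ n ih =>
    intro t h₁ h₂ h₃
    rcases lt_or_ge t (a + c) with htc | htc
    · rw [periodize, Int.emod_eq_of_lt (by omega) (by omega), add_sub_cancel]
    · have := hy (t - c) ⟨by omega, by omega⟩
      rw [sub_add_cancel] at this
      rw [← (periodic_periodize y a c).sub_eq, ih (t - c) (by omega) (by omega) (by omega), this]

theorem exists_shift_eqOn_of_two_pow_lt {d L : ℕ} (hL : 2 ^ d < L) (y : ℤ → Bool) :
    ∃ (p : ℤ) (c : ℕ), 0 < c ∧ c < L ∧ ∀ s ∈ Set.Ico p (p + d), y (s + c) = y s := by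
  obtain ⟨p, hp, q, hq, hpq, hwin⟩ := exists_ne_map_eq_of_card_lt_of_maps_to
    (s := range L) (t := (univ : Finset (Fin d → Bool)))
    (f := fun (p : ℕ) (k : Fin d) => y (p + k)) (by simpa using hL) (fun _ _ => mem_univ _)
  wlog hlt : p < q generalizing p q
  · exact this q hq p hp hpq.symm hwin.symm (by omega)
  rw [mem_range] at hq
  refine ⟨p, q - p, by omega, by omega, fun s hs => ?_⟩
  have := congrFun hwin ⟨(s - p).toNat, by simp only [Set.mem_Ico] at hs; omega⟩
  simp only at this
  rw [Set.mem_Ico] at hs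
  rw [show (p : ℤ) + ((s - p).toNat : ℕ) = s by omega,
    show (q : ℤ) + ((s - p).toNat : ℕ) = s + (q - p : ℕ) by omega] at this
  exact this.symm

theorem windowCorr_splice {L c : ℕ} {y : ℤ → Bool} {p j d : ℤ} (hy : Periodic y L) (hc : 0 < c)
    (hcL : c < L) (hj : 0 ≤ j) (hjd : j ≤ d) (hwin : ∀ s ∈ Set.Ico p (p + d), y (s + c) = y s) :
    windowCorr y 0 L j = windowCorr (periodize y p c) 0 c j +
      windowCorr (periodize y (p + c) (L - c : ℕ)) 0 (L - c) j := by
  have : NeZero L := ⟨by omega⟩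
  have : NeZero c := ⟨hc.ne'⟩
  have : NeZero (L - c) := ⟨by omega⟩
  have hwin' : ∀ s ∈ Set.Ico (p + c) (p + c + d), y (s + (L - c : ℕ)) = y s := by
    intro s hs
    rw [Set.mem_Ico] at hs
    have := hwin (s - c) ⟨by omega, by omega⟩
    rw [sub_add_cancel] at this
    rw [show s + ((L - c : ℕ) : ℤ) = s - c + L by omega, hy, this]
  calc windowCorr y 0 L j = windowCorr y p (c + (L - c)) j := by
        rw [Nat.add_sub_cancel' hcL.le]; exact windowCorr_start_eq hy _ _ _
    _ = windowCorr y p c j + windowCorr y (p + c) (L - c) j := windowCorr_add _ _ _ _ _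
    _ = windowCorr (periodize y p c) p c j +
          windowCorr (periodize y (p + c) (L - c : ℕ)) (p + c) (L - c) j := by
        rw [windowCorr_congr hj ((periodize_eqOn (by omega) hwin).symm.mono
            (Set.Ico_subset_Ico le_rfl (by omega))),
          windowCorr_congr hj ((periodize_eqOn (by omega) hwin').symm.mono
            (Set.Ico_subset_Ico le_rfl (by omega)))]
    _ = _ := by
        rw [windowCorr_start_eq (periodic_periodize _ _ _) p 0,
          windowCorr_start_eq (periodic_periodize _ _ _) (p + c) 0]

def cyclicCorrelations (d : ℕ) : Set (Fin d → ℝ) :=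
  {v | ∃ M : ℕ, (1 ≤ M ∧ M ≤ 2 ^ d) ∧ ∃ B : Finset (ZMod M),
    v = fun k : Fin d => (rMod M B ((k : ℕ) + 1) : ℝ) / M}

theorem windowCorr_mem_convexHull (d L : ℕ) (hL : 0 < L) (y : ℤ → Bool) (hy : Periodic y L) :
    (fun k : Fin d => (windowCorr y 0 L ((k : ℕ) + 1) : ℝ) / L) ∈
      convexHull ℝ (cyclicCorrelations d) := by
  induction L using Nat.strong_induction_on generalizing y with
  | _ L ih =>
  have : NeZero L := ⟨hL.ne'⟩
  rcases le_or_gt L (2 ^ d) with hsmall | hbig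
  · refine subset_convexHull ℝ _ ⟨L, ⟨hL, hsmall⟩, ({u | y u.val} : Finset (ZMod L)), ?_⟩
    simp only [windowCorr_eq_rMod hy]
  obtain ⟨p, c, hc, hcL, hwin⟩ := exists_shift_eqOn_of_two_pow_lt hbig y
  have h₁ := ih c hcL hc _ (periodic_periodize y p c)
  have h₂ := ih (L - c) (by omega) (by omega) _ (periodic_periodize y (p + c) (L - c : ℕ))
  have hL' : (0 : ℝ) < L := by exact_mod_cast hL
  have hcomb := convex_convexHull ℝ _ h₁ h₂ (a := c / L) (b := (L - c : ℕ) / L)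
    (by positivity) (by positivity) (by rw [← add_div, Nat.cast_sub hcL.le]; field_simp; ring)
  convert hcomb using 1
  funext k
  simp only [Pi.add_apply, Pi.smul_apply, smul_eq_mul]
  rw [windowCorr_splice hy hc hcL (by omega) (by omega) hwin]
  have : (0 : ℝ) < c := by exact_mod_cast hc
  have : (0 : ℝ) < (L - c : ℕ) := by exact_mod_cast (by omega : 0 < L - c)
  field_simp
  push_cast
  ring

theorem windowCorr_emod_eq_rZ {A : Finset ℤ} {N d : ℕ} (hA : A ⊆ Icc 1 (N : ℤ)) {j : ℤ}
    (hj : 1 ≤ j) (hjd : j ≤ d) :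
    windowCorr (fun t => decide (t % (N + d : ℕ) ∈ A)) 0 (N + d) j = rZ A j := by
  have hA' : ∀ x ∈ A, 1 ≤ x ∧ x ≤ N := fun x hx => by simpa using hA hx
  rw [rZ, card_filter_sub_eq_card_filter_add_mem, windowCorr]
  congr 1
  ext i
  simp only [mem_filter, mem_Ico, decide_eq_true_eq, zero_add]
  constructor
  · rintro ⟨⟨h₀, h₁⟩, hi, hij⟩
    rw [Int.emod_eq_of_lt h₀ h₁] at hi
    refine ⟨hi, ?_⟩
    have := hA' i hi
    rcases lt_or_eq_of_le (show i + j ≤ (N + d : ℕ) by omega) with h | h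
    · rwa [Int.emod_eq_of_lt (by omega) h] at hij
    · rw [h, Int.emod_self] at hij
      exact absurd (hA' 0 hij).1 (by norm_num)
  · rintro ⟨hi, hij⟩
    have := hA' i hi
    have := hA' _ hij
    refine ⟨⟨by omega, by omega⟩, ?_, ?_⟩ <;> rwa [Int.emod_eq_of_lt (by omega) (by omega)]

theorem rZ_le_of_subset_Icc {A : Finset ℤ} {N : ℕ} (hA : A ⊆ Icc 1 (N : ℤ)) (j : ℤ) :
    rZ A j ≤ N := by
  rw [rZ, card_filter_sub_eq_card_filter_add_mem]
  exact (card_filter_le _ _).trans ((card_le_card hA).trans (by simp))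

theorem exists_fin_convexCombination_of_mem_convexHull {𝕜 E : Type*} [Field 𝕜] [LinearOrder 𝕜]
    [IsStrictOrderedRing 𝕜] [AddCommGroup E] [Module 𝕜 E] [FiniteDimensional 𝕜 E] {s : Set E}
    {x : E} (hx : x ∈ convexHull 𝕜 s) :
    ∃ m, 1 ≤ m ∧ m ≤ Module.finrank 𝕜 E + 1 ∧ ∃ (w : Fin m → 𝕜) (z : Fin m → E),
      (∀ i, 0 ≤ w i) ∧ ∑ i, w i = 1 ∧ (∀ i, z i ∈ s) ∧ ∑ i, w i • z i = x := by
  obtain ⟨ι, _, z, w, hzs, hind, hw0, hw1, hwz⟩ := eq_pos_convex_span_of_mem_convexHull hx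
  have : Nonempty ι := by
    by_contra h
    simp [not_nonempty_iff.mp h] at hw1
  let e := Fintype.equivFin ι
  refine ⟨Fintype.card ι, Fintype.card_pos, ?_, w ∘ e.symm, z ∘ e.symm, fun i => (hw0 _).le,
    ?_, fun i => hzs ⟨_, rfl⟩, ?_⟩
  · exact hind.card_le_finrank_succ.trans (by gcongr; exact Submodule.finrank_le _)
  · rwa [← e.symm.sum_comp] at hw1
  · rwa [← e.symm.sum_comp] at hwz

theorem abs_div_sub_div_add_le {r N d : ℝ} (hr : 0 ≤ r) (hrN : r ≤ N) (hN : 0 < N) (hd : 0 ≤ d) :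
    |r / N - r / (N + d)| ≤ d / N := by
  rw [abs_of_nonneg (sub_nonneg.mpr (div_le_div_of_nonneg_left hr hN (by linarith))),
    div_sub_div _ _ hN.ne' (by linarith), div_le_div_iff₀ (by positivity) hN]
  nlinarith [mul_nonneg hd hN.le, mul_nonneg hd hr]

theorem stmt14 :
    ∃ C : ℝ, 0 < C ∧ ∀ d : ℕ, 1 ≤ d → ∀ N : ℕ, 1 ≤ N →
      ∀ A : Finset ℤ, A ⊆ Finset.Icc 1 (N : ℤ) →
        ∃ m : ℕ, 1 ≤ m ∧ m ≤ 2 ^ (d * (d + 1)) ∧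
          ∃ lam : Fin m → ℝ, (∀ i, 0 ≤ lam i) ∧ (∑ i, lam i = 1) ∧
            ∃ M : Fin m → ℕ, (∀ i, 1 ≤ M i ∧ M i ≤ 2 ^ d) ∧
              ∃ B : (i : Fin m) → Finset (ZMod (M i)),
                ∀ j : ℕ, 1 ≤ j → j ≤ d →
                  |(rZ A (j : ℤ) : ℝ) / N
                      - ∑ i, lam i * ((rMod (M i) (B i) (j : ℤ) : ℝ) / (M i))|
                    ≤ C * 2 ^ d * 2 ^ (d * (d + 1)) / N := by
  refine ⟨1, one_pos, fun d _ N hN A hA => ?_⟩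
  have hy : Periodic (fun t : ℤ => decide (t % (N + d : ℕ) ∈ A)) (N + d : ℕ) := fun t => by simp
  obtain ⟨m, hm, hmd, w, z, hw0, hw1, hz, hwz⟩ :=
    exists_fin_convexCombination_of_mem_convexHull
      (windowCorr_mem_convexHull d (N + d) (by omega) _ hy)
  choose M hM B hB using hz
  have hd : d < 2 ^ d := Nat.lt_two_pow_self
  have hm' : m ≤ 2 ^ (d * (d + 1)) := by
    rw [Module.finrank_fin_fun] at hmd
    exact hmd.trans <| hd.trans_le <|
      Nat.pow_le_pow_right two_pos (Nat.le_mul_of_pos_right _ (by omega))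
  refine ⟨m, hm, hm', w, hw0, hw1, M, hM, B, fun j hj hjd => ?_⟩
  have hcoord := congrFun hwz ⟨j - 1, by omega⟩
  simp only [Finset.sum_apply, Pi.smul_apply, hB, smul_eq_mul] at hcoord
  rw [show (((j - 1 : ℕ) : ℤ) + 1) = j by omega,
    windowCorr_emod_eq_rZ hA (by omega) (by omega)] at hcoord
  rw [hcoord, Nat.cast_add]
  calc _ ≤ (d : ℝ) / N := abs_div_sub_div_add_le (by positivity)
          (by exact_mod_cast rZ_le_of_subset_Icc hA _) (by positivity) (by positivity)
    _ ≤ 1 * 2 ^ d * 2 ^ (d * (d + 1)) / N := by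
          rw [one_mul]
          gcongr
          exact_mod_cast hd.le.trans (Nat.le_mul_of_pos_right _ (by positivity))
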